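/- For every clique tree T of G_I, every subtree of the tree model defined by T has at most k+1 leaves; consequently, the vertex leafage of G_I is at most k+1. -/

import Mathlib

open SimpleGraph

/-- The degree of a vertex in a graph, via `Set.ncard`. -/
noncomputable def deg {W : Type*} (T : SimpleGraph W) (w : W) : ℕ :=
  (T.neighborSet w).ncard

/-- The set of leaves (degree-one vertices) of a graph. -/
def leaves {W : Type*} (T : SimpleGraph W) : Set W :=
  {w | deg T w = 1}

/-- The number of leaves. -/
noncomputable def numLeaves {W : Type*} (T : SimpleGraph W) : ℕ :=
  (leaves T).ncard

/-- The set of leaves of the subgraph of `T` induced by `s`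
(nodes of `s` with exactly one neighbour inside `s`). -/
def subLeaves {W : Type*} (T : SimpleGraph W) (s : Set W) : Set W :=
  {w | w ∈ s ∧ (T.neighborSet w ∩ s).ncard = 1}

/-- The number of leaves of the subtree induced by `s`. -/
noncomputable def numSubLeaves {W : Type*} (T : SimpleGraph W) (s : Set W) : ℕ :=
  (subLeaves T s).ncard

/-- A tree model of a graph `G`: a finite host tree `T` together with nonempty
subtrees `sub u` such that distinct vertices are adjacent in `G` iff their
subtrees intersect. -/
structure TreeModel {V : Type*} (G : SimpleGraph V) where
  W : Type
  finW : Finite W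
  T : SimpleGraph W
  tree : T.IsTree
  sub : V → Set W
  sub_nonempty : ∀ u, (sub u).Nonempty
  sub_conn : ∀ u, (T.induce (sub u)).Connected
  adj_iff : ∀ u v, u ≠ v → (G.Adj u v ↔ (sub u ∩ sub v).Nonempty)

/-- The leafage of a chordal graph: the minimum number of host-tree leaves over
all tree models. -/
noncomputable def leafage {V : Type*} (G : SimpleGraph V) : ℕ :=
  sInf {n | ∃ M : TreeModel G, numLeaves M.T = n}

/-- The vertex leafage of a chordal graph: the least `k` such that `G` has a tree
model all of whose subtrees have at most `k` leaves. -/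
noncomputable def vleafage {V : Type*} (G : SimpleGraph V) : ℕ :=
  sInf {k | ∃ M : TreeModel G, ∀ u, numSubLeaves M.T (M.sub u) ≤ k}

/-- A maximal clique of `G`. -/
def IsMaxClique {V : Type*} (G : SimpleGraph V) (C : Set V) : Prop :=
  G.IsClique C ∧ ∀ D, G.IsClique D → C ⊆ D → D = C

/-- The type of maximal cliques of `G`. -/
abbrev MaxCliques {V : Type*} (G : SimpleGraph V) := {C : Set V // IsMaxClique G C}

/-- A clique tree of `G`: a tree whose nodes are exactly the maximal cliques of `G`,
such that every node on the path between nodes `C` and `C'` contains `C ∩ C'`. -/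
structure CliqueTree {V : Type*} (G : SimpleGraph V) where
  T : SimpleGraph (MaxCliques G)
  tree : T.IsTree
  path_cond : ∀ (C C' : MaxCliques G) (p : T.Walk C C'), p.IsPath →
    ∀ C'' ∈ p.support, C.1 ∩ C'.1 ⊆ C''.1

/-- The subtree (node set) assigned to a vertex `u` in the tree model defined by a
clique tree of `G`: the set of maximal cliques containing `u`. -/
def cliqueSub {V : Type*} (G : SimpleGraph V) (u : V) : Set (MaxCliques G) :=
  {C | u ∈ C.1}

/-- The set of nodes of degree at least 3. -/
def Hh {W : Type*} (T : SimpleGraph W) : Set W := {w | 3 ≤ deg T w}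

/-- The set of edges incident to a node of degree at least 3. -/
def Ee {W : Type*} (T : SimpleGraph W) : Set (Sym2 W) :=
  {e | e ∈ T.edgeSet ∧ ∃ w ∈ e, w ∈ Hh T}

/-- The vertex set of the graph `G_I`: variable vertices `v i`, clause vertices `y j`,
and two extra vertices `z 0`, `z 1`. -/
inductive GV (n m : ℕ) where
  | v : Fin n → GV n m
  | y : Fin m → GV n m
  | z : Fin 2 → GV n m
deriving DecidableEq

instance (n m : ℕ) : Finite (GV n m) :=
  Finite.of_surjective
    (fun x : (Fin n ⊕ Fin m ⊕ Fin 2) => match x with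
      | Sum.inl i => GV.v i
      | Sum.inr (Sum.inl j) => GV.y j
      | Sum.inr (Sum.inr t) => GV.z t)
    (by
      intro g
      cases g with
      | v i => exact ⟨Sum.inl i, rfl⟩
      | y j => exact ⟨Sum.inr (Sum.inl j), rfl⟩
      | z t => exact ⟨Sum.inr (Sum.inr t), rfl⟩)

/-- The split graph `G_I` of the reduction: `{y j}` is a clique, `{v i} ∪ {z t}` is an
independent set, `v i` is adjacent to `y j` iff `i ∈ C j`, and each `z t` is adjacent to
every `y j`. -/
def GI (n m : ℕ) (C : Fin m → Finset (Fin n)) : SimpleGraph (GV n m) :=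
  SimpleGraph.fromRel (fun a b =>
    match a, b with
    | GV.y _, GV.y _ => True
    | GV.v i, GV.y j => i ∈ C j
    | GV.z _, GV.y _ => True
    | _, _ => False)

/-- The maximal clique `A = {z_1, y_1, …, y_m}`. -/
def setA (n m : ℕ) : Set (GV n m) := {GV.z 0} ∪ {x | ∃ j, x = GV.y j}

/-- The maximal clique `B = {z_2, y_1, …, y_m}`. -/
def setB (n m : ℕ) : Set (GV n m) := {GV.z 1} ∪ {x | ∃ j, x = GV.y j}

/-- The maximal clique `Q_i = {v_i} ∪ {y_j : v_i ∈ C_j}`. -/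
def setQ (n m : ℕ) (C : Fin m → Finset (Fin n)) (i : Fin n) : Set (GV n m) :=
  {GV.v i} ∪ {x | ∃ j, x = GV.y j ∧ i ∈ C j}

/-!
Every vertex other than a clause vertex `y_j` is simplicial (its neighbourhood is a clique), so
it lies in exactly one maximal clique, namely its closed neighbourhood, and its subtree is a single
node. Every maximal clique contains a simplicial vertex, so `y_j` lies only in the closed
neighbourhoods of `z_1`, `z_2` and the `v_i ∈ C_j`: at most `k + 2` maximal cliques. A connected
subtree with at least three nodes has a node with two neighbours inside it, so at most `k + 1` of
its nodes are leaves. Finally, distinct maximal cliques meet only in clause vertices, so the star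
centred at the closed neighbourhood of `z_1` is a clique tree; the tree model it defines witnesses
the bound on the vertex leafage.
-/

namespace SimpleGraph

variable {W : Type*} {H : SimpleGraph W}

lemma Reachable.adj_or_exists_two_neighbors {a b : W} (h : H.Reachable a b) (hab : a ≠ b) :
    H.Adj a b ∨ ∃ w x y, x ≠ y ∧ H.Adj w x ∧ H.Adj w y := by
  classical
  obtain ⟨p, hp⟩ := h.some.toPath
  cases p with
  | nil => exact absurd rfl hab
  | cons h q =>
    cases q with
    | nil => exact Or.inl h
    | cons h' q' =>
      refine Or.inr ⟨_, _, _, fun ha => ?_, h.symm, h'⟩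
      subst ha
      exact (Walk.cons_isPath_iff _ _).mp hp |>.2 (by simp)

lemma Preconnected.exists_two_neighbors (hH : H.Preconnected) {a b c : W}
    (hab : a ≠ b) (hac : a ≠ c) (hbc : b ≠ c) :
    ∃ w x y, x ≠ y ∧ H.Adj w x ∧ H.Adj w y := by
  rcases (hH a b).adj_or_exists_two_neighbors hab with hb | h
  · rcases (hH a c).adj_or_exists_two_neighbors hac with hc | h
    · exact ⟨a, b, c, hbc, hb, hc⟩
    · exact h
  · exact h

end SimpleGraph

section SubLeaves

variable {W : Type*} [Finite W] {T : SimpleGraph W} {s : Set W}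

lemma numSubLeaves_le_ncard (T : SimpleGraph W) (s : Set W) : numSubLeaves T s ≤ s.ncard :=
  Set.ncard_le_ncard (fun _ hw => hw.1) s.toFinite

lemma numSubLeaves_lt_ncard (hs : (T.induce s).Preconnected) (h3 : 2 < s.ncard) :
    numSubLeaves T s < s.ncard := by
  obtain ⟨a, ha, b, hb, c, hc, hab, hac, hbc⟩ := (Set.two_lt_ncard s.toFinite).mp h3
  obtain ⟨w, x, y, hxy, hwx, hwy⟩ := hs.exists_two_neighbors (a := ⟨a, ha⟩) (b := ⟨b, hb⟩)
    (c := ⟨c, hc⟩) (by simpa) (by simpa) (by simpa)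
  have hw : w.1 ∉ subLeaves T s := fun hw => by
    have hxy : 1 < (T.neighborSet w ∩ s).ncard := (Set.one_lt_ncard (Set.toFinite _)).mpr
      ⟨x, ⟨hwx, x.2⟩, y, ⟨hwy, y.2⟩, Subtype.coe_ne_coe.mpr hxy⟩
    exact hxy.ne' hw.2
  exact Set.ncard_lt_ncard ⟨fun _ hv => hv.1, fun h => hw (h w.2)⟩ s.toFinite

lemma numSubLeaves_le_of_ncard_le {k : ℕ} (hs : (T.induce s).Preconnected) (hk : 1 ≤ k)
    (hcard : s.ncard ≤ k + 2) : numSubLeaves T s ≤ k + 1 := by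
  by_cases h3 : 2 < s.ncard
  · have := numSubLeaves_lt_ncard hs h3
    omega
  · have := numSubLeaves_le_ncard T s
    omega

end SubLeaves

section MaxCliques

variable {V : Type*} {G : SimpleGraph V}

lemma isMaxClique_iff_maximal {D : Set V} : IsMaxClique G D ↔ Maximal G.IsClique D :=
  ⟨fun h => ⟨h.1, fun _ hE hDE => (h.2 _ hE hDE).le⟩,
    fun h => ⟨h.1, fun _ hE hDE => (h.2 hE hDE).antisymm hDE⟩⟩

lemma exists_isMaxClique_superset [Finite V] {D : Set V} (hD : G.IsClique D) :
    ∃ E, IsMaxClique G E ∧ D ⊆ E := by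
  obtain ⟨E, hDE, hE⟩ := Finite.exists_le_maximal hD
  exact ⟨E, isMaxClique_iff_maximal.mpr hE, hDE⟩

lemma subset_insert_neighborSet_of_isClique {D : Set V} (hD : G.IsClique D) {u : V}
    (hu : u ∈ D) : D ⊆ insert u (G.neighborSet u) := fun x hx =>
  (eq_or_ne u x).elim (fun h => Or.inl h.symm) fun h => Or.inr (hD hu hx h)

def IsSimplicial (G : SimpleGraph V) (u : V) : Prop :=
  G.IsClique (G.neighborSet u)

lemma IsSimplicial.isClique_insert_neighborSet {u : V} (h : IsSimplicial G u) :
    G.IsClique (insert u (G.neighborSet u)) :=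
  SimpleGraph.isClique_insert.mpr ⟨h, fun _ hx _ => hx⟩

lemma IsSimplicial.isMaxClique {u : V} (h : IsSimplicial G u) :
    IsMaxClique G (insert u (G.neighborSet u)) :=
  ⟨h.isClique_insert_neighborSet, fun _ hE hsub =>
    (subset_insert_neighborSet_of_isClique hE (hsub (Set.mem_insert u _))).antisymm hsub⟩

lemma IsMaxClique.eq_insert_neighborSet {D : Set V} (hD : IsMaxClique G D) {u : V} (hu : u ∈ D)
    (h : IsSimplicial G u) : D = insert u (G.neighborSet u) :=
  (hD.2 _ h.isClique_insert_neighborSet (subset_insert_neighborSet_of_isClique hD.1 hu)).symm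

lemma IsSimplicial.cliqueSub_subsingleton {u : V} (h : IsSimplicial G u) :
    (cliqueSub G u).Subsingleton := fun D hD D' hD' =>
  Subtype.ext ((D.2.eq_insert_neighborSet hD h).trans (D'.2.eq_insert_neighborSet hD' h).symm)

end MaxCliques

lemma SimpleGraph.Walk.IsPath.mem_support_starGraph {W : Type*} {r a b w : W}
    {p : (starGraph r).Walk a b} (hp : p.IsPath) (hw : w ∈ p.support) :
    w = a ∨ w = b ∨ w = r := by
  rcases p with _ | ⟨h, _ | ⟨h', _ | ⟨h'', q⟩⟩⟩
  · exact Or.inl (by simpa using hw)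
  · exact (by simpa using hw : w = a ∨ w = b).imp_right Or.inl
  all_goals
    have := starGraph_adj.mp h
    have := starGraph_adj.mp h'
    simp only [Walk.cons_isPath_iff, Walk.support_cons, Walk.support_nil, List.mem_cons] at hp hw
  · grind
  · grind [starGraph_adj.mp h'', q.start_mem_support]

namespace CliqueTree

lemma induce_cliqueSub_connected {V : Type*} [Finite V] {G : SimpleGraph V} (CT : CliqueTree G)
    (u : V) : (CT.T.induce (cliqueSub G u)).Connected := by
  classical
  obtain ⟨D, hD, hu⟩ := exists_isMaxClique_superset (G.isClique_singleton u)
  refine CT.T.induce_connected_of_patches ⟨D, hD⟩ (hu rfl) fun {D'} hD' => ?_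
  let p := (CT.tree.connected.preconnected ⟨D, hD⟩ D').some.toPath
  refine ⟨{x | x ∈ p.1.support}, fun x hx => CT.path_cond _ _ p.1 p.2 x hx ⟨hu rfl, hD'⟩,
    p.1.start_mem_support, p.1.end_mem_support, ?_⟩
  exact p.1.connected_induce_support.preconnected _ _

noncomputable def toTreeModel {V : Type} [Finite V] {G : SimpleGraph V} (CT : CliqueTree G) :
    TreeModel G where
  W := MaxCliques G
  finW := inferInstance
  T := CT.T
  tree := CT.tree
  sub := cliqueSub G
  sub_nonempty u := (CT.induce_cliqueSub_connected u).nonempty.elim fun D => ⟨D.1, D.2⟩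
  sub_conn := CT.induce_cliqueSub_connected
  adj_iff u v huv := by
    refine ⟨fun h => ?_, fun ⟨D, hu, hv⟩ => D.2.1 hu hv huv⟩
    obtain ⟨D, hD, huvD⟩ := exists_isMaxClique_superset (G.isClique_pair.mpr fun _ => h)
    exact ⟨⟨D, hD⟩, huvD (Set.mem_insert u _), huvD (Set.mem_insert_of_mem u rfl)⟩

lemma vleafage_le {V : Type} [Finite V] {G : SimpleGraph V} (CT : CliqueTree G) {k : ℕ}
    (h : ∀ u, numSubLeaves CT.T (cliqueSub G u) ≤ k) : vleafage G ≤ k :=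
  Nat.sInf_le ⟨CT.toTreeModel, h⟩

def ofStar {V : Type*} {G : SimpleGraph V} (c : MaxCliques G)
    (hc : ∀ D D' : MaxCliques G, D ≠ D' → D.1 ∩ D'.1 ⊆ c.1) : CliqueTree G where
  T := starGraph c
  tree := isTree_starGraph c
  path_cond D D' p hp E hE := by
    by_cases hDD' : D = D'
    · subst hDD'
      obtain rfl : p = .nil := Walk.eq_nil_iff_nil.mpr (Walk.isPath_iff_nil.mp hp)
      obtain rfl : E = D := by simpa using hE
      exact Set.inter_subset_left
    rcases hp.mem_support_starGraph hE with rfl | rfl | rfl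
    · exact Set.inter_subset_left
    · exact Set.inter_subset_right
    · exact hc D D' hDD'

end CliqueTree

namespace GI

variable {n m : ℕ} {C : Fin m → Finset (Fin n)}

lemma adj_z_y (t : Fin 2) (j : Fin m) : (GI n m C).Adj (GV.z t) (GV.y j) := by
  simp [GI]

lemma isClique_range_y : (GI n m C).IsClique (Set.range GV.y) := by
  rintro _ ⟨j, rfl⟩ _ ⟨j', rfl⟩ h
  simpa [GI] using h

lemma neighborSet_subset_range_y {x : GV n m} (hx : x ∉ Set.range GV.y) :
    (GI n m C).neighborSet x ⊆ Set.range GV.y := by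
  intro w hw
  cases x <;> cases w <;> simp_all [GI]

lemma isSimplicial_of_notMem_range_y {x : GV n m} (hx : x ∉ Set.range GV.y) :
    IsSimplicial (GI n m C) x :=
  isClique_range_y.subset (neighborSet_subset_range_y hx)

lemma mem_of_adj_y {x : GV n m} {j : Fin m} (hx : x ∉ Set.range GV.y)
    (h : (GI n m C).Adj x (GV.y j)) :
    x ∈ insert (GV.z 0) (insert (GV.z 1) (GV.v '' (C j : Set (Fin n)))) := by
  cases x with
  | v i => simpa [GI] using h
  | y j' => exact absurd ⟨j', rfl⟩ hx
  | z t => fin_cases t <;> simp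

lemma exists_mem_notMem_range_y {D : Set (GV n m)} (hD : IsMaxClique (GI n m C) D) :
    ∃ x ∈ D, x ∉ Set.range GV.y := by
  by_contra! h
  have hz : IsSimplicial (GI n m C) (GV.z 0) := isSimplicial_of_notMem_range_y (by simp)
  have hDz : D ⊆ insert (GV.z 0) ((GI n m C).neighborSet (GV.z 0)) := by
    rintro _ hx
    obtain ⟨j, rfl⟩ := h _ hx
    exact Or.inr (adj_z_y (C := C) 0 j)
  have hzD : GV.z 0 ∈ D := hD.2 _ hz.isClique_insert_neighborSet hDz ▸ Set.mem_insert _ _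
  simpa using h _ hzD

lemma eq_insert_neighborSet_of_isMaxClique {D : Set (GV n m)} (hD : IsMaxClique (GI n m C) D) :
    ∃ x ∉ Set.range GV.y, D = insert x ((GI n m C).neighborSet x) := by
  obtain ⟨x, hxD, hx⟩ := exists_mem_notMem_range_y hD
  exact ⟨x, hx, hD.eq_insert_neighborSet hxD (isSimplicial_of_notMem_range_y hx)⟩

lemma inter_subset_range_y {D D' : Set (GV n m)} (hD : IsMaxClique (GI n m C) D)
    (hD' : IsMaxClique (GI n m C) D') (hDD' : D ≠ D') : D ∩ D' ⊆ Set.range GV.y := by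
  rintro x ⟨hx, hx'⟩
  by_contra hy
  have h := isSimplicial_of_notMem_range_y (C := C) hy
  exact hDD' ((hD.eq_insert_neighborSet hx h).trans (hD'.eq_insert_neighborSet hx' h).symm)

variable (n m C) in
def centerClique : MaxCliques (GI n m C) :=
  ⟨_, (isSimplicial_of_notMem_range_y (x := GV.z 0) (by simp)).isMaxClique⟩

variable (n m C) in
def starCliqueTree : CliqueTree (GI n m C) :=
  .ofStar (centerClique n m C) fun D D' hDD' =>
    (inter_subset_range_y D.2 D'.2 (Subtype.coe_ne_coe.mpr hDD')).trans
      (by rintro _ ⟨j, rfl⟩; exact Or.inr (adj_z_y (C := C) 0 j))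

lemma ncard_cliqueSub_le {k : ℕ} (hC : ∀ j, (C j).card ≤ k) (u : GV n m) :
    (cliqueSub (GI n m C) u).ncard ≤ k + 2 := by
  by_cases hu : u ∈ Set.range GV.y
  · obtain ⟨j, rfl⟩ := hu
    set X := insert (GV.z 0) (insert (GV.z 1) (GV.v '' (C j : Set (Fin n))))
    have hsub : Subtype.val '' cliqueSub (GI n m C) (GV.y j) ⊆
        (fun x => insert x ((GI n m C).neighborSet x)) '' X := by
      rintro _ ⟨D, hyD, rfl⟩
      obtain ⟨x, hx, hDx⟩ := eq_insert_neighborSet_of_isMaxClique D.2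
      have hyx : GV.y j ∈ insert x ((GI n m C).neighborSet x) := hDx ▸ hyD
      refine ⟨x, mem_of_adj_y hx ?_, hDx.symm⟩
      exact (hyx.resolve_left fun h => hx ⟨j, h⟩ : (GI n m C).Adj x (GV.y j))
    have hX : X.ncard ≤ k + 2 := calc
      X.ncard ≤ (GV.v '' (C j : Set (Fin n)) : Set (GV n m)).ncard + 1 + 1 :=
        (Set.ncard_insert_le _ _).trans (Nat.add_le_add_right (Set.ncard_insert_le _ _) 1)
      _ ≤ (C j).card + 1 + 1 := by
        grw [Set.ncard_image_le (C j).finite_toSet, Set.ncard_coe_finset]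
      _ ≤ k + 2 := by grw [hC j]
    calc (cliqueSub (GI n m C) (GV.y j)).ncard
        = (Subtype.val '' cliqueSub (GI n m C) (GV.y j)).ncard :=
          (Set.ncard_image_of_injective _ Subtype.val_injective).symm
      _ ≤ ((fun x => insert x ((GI n m C).neighborSet x)) '' X).ncard :=
          Set.ncard_le_ncard hsub (Set.toFinite _)
      _ ≤ X.ncard := Set.ncard_image_le X.toFinite
      _ ≤ k + 2 := hX
  · calc (cliqueSub (GI n m C) u).ncard ≤ 1 := Set.ncard_le_one_iff_subsingleton.mpr
          (isSimplicial_of_notMem_range_y hu).cliqueSub_subsingleton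
      _ ≤ k + 2 := by omega

end GI

theorem stmt5_general (k n m : ℕ) (hk : 3 ≤ k)
    (C : Fin m → Finset (Fin n)) (hC : ∀ j, (C j).card = k) :
    (∀ (CT : CliqueTree (GI n m C)) (u : GV n m),
        numSubLeaves CT.T (cliqueSub (GI n m C) u) ≤ k + 1) ∧
    vleafage (GI n m C) ≤ k + 1 := by
  have hleaves (CT : CliqueTree (GI n m C)) (u : GV n m) :
      numSubLeaves CT.T (cliqueSub (GI n m C) u) ≤ k + 1 :=
    numSubLeaves_le_of_ncard_le (CT.induce_cliqueSub_connected u).preconnected (by omega)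
      (GI.ncard_cliqueSub_le (fun j => (hC j).le) u)
  exact ⟨hleaves, (GI.starCliqueTree n m C).vleafage_le (hleaves _)⟩

/-- For every clique tree `T` of `G_I`, every subtree of the tree model defined by `T`
has at most `k + 1` leaves; consequently, the vertex leafage of `G_I` is at most
`k + 1`. -/
theorem stmt5 (k n m : ℕ) (hk : 3 ≤ k) (hn : k ≤ n) (hm : 1 ≤ m)
    (C : Fin m → Finset (Fin n)) (hC : ∀ j, (C j).card = k) :
    (∀ (CT : CliqueTree (GI n m C)) (u : GV n m),
        numSubLeaves CT.T (cliqueSub (GI n m C) u) ≤ k + 1) ∧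
    vleafage (GI n m C) ≤ k + 1 :=
  stmt5_general k n m hk C hC
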